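/- arXiv:1404.4339 — 2 statements merged into one kernel-verified Lean document; each statement's English description precedes it below -/
import Mathlib

section
/- Let f be a positive monotone decreasing function on (0,∞) for which Q = ∫₀^∞ f dx is finite. Then -∫₀^∞ f(x)(1 + ln(x f(x))) dx ≥ -Q ln Q. -/
/-!
Write `F x = ∫₀ˣ f`. Since `f` decreases, `x f(x) ≤ F x`, so the integrand `f (1 + log (x f))` is
at most `f (1 + log F) = (F log F)'`. The primitive `F` is right-differentiable everywhere with
derivative the right limit of `f`, which equals `f` off the countably many jumps of `f`; this is
enough to integrate the bound over `[0, b]`, giving `∫₀ᵇ f (1 + log (x f)) ≤ F b log F b`.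
Letting `b → ∞`, `F b → Q`.
-/

open MeasureTheory Filter Set Function Topology

namespace AntitoneOn

variable {f : ℝ → ℝ}

theorem tendsto_rightLim {x : ℝ} (hf : AntitoneOn f (Ici x)) :
    Tendsto f (𝓝[>] x) (𝓝 (rightLim f x)) := by
  have hbdd : BddAbove (f '' Ioi x) := ⟨f x, by
    rintro _ ⟨y, hy, rfl⟩
    exact hf self_mem_Ici (mem_Ici.2 hy.le) hy.le⟩
  have h := (hf.mono Ioi_subset_Ici_self).tendsto_nhdsGT hbdd
  rwa [rightLim_eq_of_tendsto h]

theorem ae_rightLim_eq {s : Set ℝ} (hf : AntitoneOn f s) (hs : IsOpen s) (μ : Measure ℝ)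
    [NullSingletonClass μ] : ∀ᵐ x ∂μ, x ∈ s → rightLim f x = f x := by
  filter_upwards [hf.countable_not_continuousWithinAt.ae_notMem μ] with x hx hxs
  have hcont : ContinuousAt f x := by
    by_contra h
    exact hx ⟨hxs, fun h' => h (h'.continuousAt (hs.mem_nhds hxs))⟩
  exact hcont.continuousWithinAt.rightLim_eq

theorem sub_mul_le_intervalIntegral {a b : ℝ} (hf : AntitoneOn f (Ioc a b)) (hab : a ≤ b)
    (hint : IntervalIntegrable f volume a b) : (b - a) * f b ≤ ∫ t in a..b, f t := by
  calc (b - a) * f b = ∫ _ in a..b, f b := by simp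
    _ ≤ ∫ t in a..b, f t := intervalIntegral.integral_mono_on_of_le_Ioo hab
        intervalIntegrable_const hint fun t ht =>
          hf ⟨ht.1, ht.2.le⟩ ⟨ht.1.trans ht.2, le_rfl⟩ ht.2.le

theorem hasDerivWithinAt_intervalIntegral_rightLim {a x : ℝ} (hf : AntitoneOn f (Ici x))
    (hint : IntervalIntegrable f volume a x) :
    HasDerivWithinAt (fun u => ∫ t in a..u, f t) (rightLim f x) (Ioi x) x := by
  have hmeas : StronglyMeasurableAtFilter f (𝓝[>] x) :=
    ⟨Ioi x, self_mem_nhdsWithin, (aemeasurable_restrict_of_antitoneOn measurableSet_Ioi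
      (hf.mono Ioi_subset_Ici_self)).aestronglyMeasurable⟩
  exact (intervalIntegral.integral_hasDerivWithinAt_of_tendsto_ae_right (s := Ici x) hint hmeas
    (hf.tendsto_rightLim.mono_left inf_le_left)).mono Ioi_subset_Ici_self

end AntitoneOn

theorem intervalIntegral.integral_le_sub_of_hasDeriv_right_of_ae_le {φ g g' : ℝ → ℝ} {a b : ℝ}
    (hab : a ≤ b) (hcont : ContinuousOn g (Icc a b))
    (hderiv : ∀ x ∈ Ioo a b, HasDerivWithinAt g (g' x) (Ioi x) x)
    (φint : IntegrableOn φ (Icc a b)) (hφg : ∀ᵐ x, x ∈ Ioo a b → φ x ≤ g' x) :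
    ∫ y in a..b, φ y ≤ g b - g a := by
  have hψ : ∀ᵐ x, x ∈ Icc a b → φ x = min (φ x) (g' x) := by
    filter_upwards [hφg, Measure.ae_ne volume a, Measure.ae_ne volume b] with x hx hxa hxb hxab
    exact (min_eq_left (hx ⟨lt_of_le_of_ne hxab.1 hxa.symm, lt_of_le_of_ne hxab.2 hxb⟩)).symm
  calc ∫ y in a..b, φ y = ∫ y in a..b, min (φ y) (g' y) :=
        intervalIntegral.integral_congr_ae (hψ.mono fun x hx hxab =>
          hx (Ioc_subset_Icc_self (uIoc_of_le hab ▸ hxab)))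
    _ ≤ g b - g a := integral_le_sub_of_hasDeriv_right_of_le hab hcont hderiv
        (φint.congr_fun_ae ((ae_restrict_iff' measurableSet_Icc).2 hψ)) fun x _ => min_le_right _ _

theorem AntitoneOn.intervalIntegral_mul_one_add_log_mul_le {f : ℝ → ℝ} {b : ℝ}
    (hmono : AntitoneOn f (Ioi 0)) (hpos : ∀ x ∈ Ioi (0:ℝ), 0 < f x) (hb : 0 ≤ b)
    (hint : IntervalIntegrable f volume 0 b)
    (hint2 : IntervalIntegrable (fun x => f x * (1 + Real.log (x * f x))) volume 0 b) :
    ∫ x in 0..b, f x * (1 + Real.log (x * f x)) ≤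
      (∫ x in 0..b, f x) * Real.log (∫ x in 0..b, f x) := by
  set F : ℝ → ℝ := fun u => ∫ t in 0..u, f t
  have hint_of_mem : ∀ x ∈ Ioo 0 b, IntervalIntegrable f volume 0 x := fun x hx =>
    hint.mono_set (uIcc_subset_uIcc_left (uIcc_of_le hb ▸ Ioo_subset_Icc_self hx))
  have hmul_pos : ∀ x ∈ Ioo 0 b, 0 < x * f x := fun x hx => mul_pos hx.1 (hpos x hx.1)
  have hmul_le : ∀ x ∈ Ioo 0 b, x * f x ≤ F x := fun x hx => by
    simpa using (hmono.mono Ioc_subset_Ioi_self).sub_mul_le_intervalIntegral hx.1.le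
      (hint_of_mem x hx)
  have hderiv : ∀ x ∈ Ioo 0 b, HasDerivWithinAt (fun u => F u * Real.log (F u))
      ((Real.log (F x) + 1) * rightLim f x) (Ioi x) x := fun x hx =>
    (Real.hasDerivAt_mul_log ((hmul_pos x hx).trans_le (hmul_le x hx)).ne').comp_hasDerivWithinAt
      x ((hmono.mono (Ici_subset_Ioi.2 hx.1)).hasDerivWithinAt_intervalIntegral_rightLim
        (hint_of_mem x hx))
  have hbound : ∀ᵐ x, x ∈ Ioo 0 b →
      f x * (1 + Real.log (x * f x)) ≤ (Real.log (F x) + 1) * rightLim f x := by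
    filter_upwards [hmono.ae_rightLim_eq isOpen_Ioi volume] with x hx hxb
    rw [hx hxb.1, mul_comm, add_comm]
    gcongr
    · exact (hpos x hxb.1).le
    · exact hmul_pos x hxb
    · exact hmul_le x hxb
  simpa [F] using intervalIntegral.integral_le_sub_of_hasDeriv_right_of_ae_le hb
    (Real.continuous_mul_log.comp_continuousOn
      (uIcc_of_le hb ▸ intervalIntegral.continuousOn_primitive_interval' hint left_mem_uIcc))
    hderiv ((intervalIntegrable_iff_integrableOn_Icc_of_le hb).1 hint2) hbound

/-- Let `f` be a positive monotone decreasing function on `(0,∞)` for which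
`Q = ∫₀^∞ f dx` is finite (and for which the entropy integral exists).  Then
`-∫₀^∞ f(x)(1 + ln(x f(x))) dx ≥ -Q ln Q`. -/
theorem antitone_integral_log_inequality_Ioi (f : ℝ → ℝ)
    (hpos : ∀ x ∈ Set.Ioi (0:ℝ), 0 < f x)
    (hmono : AntitoneOn f (Set.Ioi (0:ℝ)))
    (hint : IntegrableOn f (Set.Ioi (0:ℝ)))
    (hint2 : IntegrableOn (fun x => f x * (1 + Real.log (x * f x))) (Set.Ioi (0:ℝ)))
    (Q : ℝ) (hQ : Q = ∫ x in Set.Ioi (0:ℝ), f x) :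
    (-∫ x in Set.Ioi (0:ℝ), f x * (1 + Real.log (x * f x)))
      ≥ -Q * Real.log Q := by
  have hprimitive := intervalIntegral_tendsto_integral_Ioi 0 hint tendsto_id
  rw [← hQ] at hprimitive
  have hle := le_of_tendsto_of_tendsto (intervalIntegral_tendsto_integral_Ioi 0 hint2 tendsto_id)
    ((Real.continuous_mul_log.tendsto Q).comp hprimitive) <|
    (eventually_ge_atTop 0).mono fun b hb =>
      hmono.intervalIntegral_mul_one_add_log_mul_le hpos hb
        ((intervalIntegrable_iff_integrableOn_Ioc_of_le hb).2 (hint.mono_set Ioc_subset_Ioi_self))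
        ((intervalIntegrable_iff_integrableOn_Ioc_of_le hb).2 (hint2.mono_set Ioc_subset_Ioi_self))
  linarith
end

section
/- Suppose f : (0,b) → (0,∞) is monotone decreasing with ∫₀^b (f(x))^s dx < ∞ for some s > 0. If the first slide derivative ψ₁(f) (the right-hand derivative of σ_f at 0) exists, then ψ₁(f) ≥ 0. -/
/-!
At `t = 0` the density is uniform and `σ_f(0) = 0`. For `0 < t ≤ s` the normalised density
`g = f^t / A(t)` is decreasing with `∫ g = 1`, so `x g(x) ≤ G(x) := ∫₀^x g` and
`∫ g log (x g) ≤ ∫ g log G ≤ -1`; the last bound is the layer-cake estimate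
`ν {G ≤ u} ≥ u` for the probability measure `ν = g dx`. Hence `σ_f(t) ≥ 0` for small `t > 0`.
If the entropy integral diverges, the Bochner integral is `0` and `σ_f(t) = -1`, but then the
difference quotient `-1/t` tends to `-∞`, which a finite right derivative rules out.
-/

open MeasureTheory

/-- The slide function `σ_f(t)` of a function `f` on `(0,b)`:
`σ_f(t) = -1 - ∫₀^b (f(x)^t / A(t)) ln( x · f(x)^t / A(t) ) dx` where
`A(t) = ∫₀^b f(x)^t dx`. -/
noncomputable def slideFun (b : ℝ) (f : ℝ → ℝ) (t : ℝ) : ℝ :=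
  -1 - ∫ x in Set.Ioo (0:ℝ) b,
    (f x ^ t / ∫ y in Set.Ioo (0:ℝ) b, f y ^ t) *
      Real.log (x * (f x ^ t / ∫ y in Set.Ioo (0:ℝ) b, f y ^ t))

open Set Real Filter Topology

theorem one_le_lintegral_neg_log {α : Type*} [MeasurableSpace α] {ν : Measure α} {G : α → ℝ}
    (hG : AEMeasurable G ν) (hG_mem : ∀ᵐ x ∂ν, 0 < G x ∧ G x ≤ 1)
    (hG_le : ∀ u ∈ Ioo (0 : ℝ) 1, ENNReal.ofReal u ≤ ν {x | G x ≤ u}) :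
    1 ≤ ∫⁻ x, ENNReal.ofReal (-log (G x)) ∂ν := by
  have h_nonneg : 0 ≤ᵐ[ν] fun x => -log (G x) := by
    filter_upwards [hG_mem] with x hx
    simpa using log_nonpos hx.1.le hx.2
  rw [lintegral_eq_lintegral_meas_le ν h_nonneg hG.log.neg]
  calc (1 : ENNReal) = ∫⁻ t in Ioi 0, ENNReal.ofReal (exp (-t)) := by
        rw [← ofReal_integral_eq_lintegral_ofReal (integrableOn_exp_neg_Ioi 0)
          (ae_of_all _ fun t => (exp_pos _).le), integral_exp_neg_Ioi_zero, ENNReal.ofReal_one]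
    _ ≤ ∫⁻ t in Ioi 0, ν {x | t ≤ -log (G x)} := by
        refine setLIntegral_mono' measurableSet_Ioi fun t ht => ?_
        calc ENNReal.ofReal (exp (-t)) ≤ ν {x | G x ≤ exp (-t)} :=
              hG_le _ ⟨exp_pos _, exp_lt_one_iff.2 (neg_lt_zero.2 ht)⟩
          _ ≤ ν {x | t ≤ -log (G x)} := by
              refine measure_mono_ae ?_
              filter_upwards [hG_mem] with x hx (hxt : G x ≤ exp (-t))
              show t ≤ -log (G x)
              rwa [le_neg, ← exp_le_exp, exp_log hx.1]

theorem strictMonoOn_primitive {b : ℝ} {g : ℝ → ℝ} (hg : IntegrableOn g (Ioo 0 b))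
    (hg_pos : ∀ x ∈ Ioo 0 b, 0 < g x) : StrictMonoOn (fun x => ∫ y in 0..x, g y) (Icc 0 b) := by
  intro x hx y hy hxy
  show ∫ z in 0..x, g z < ∫ z in 0..y, g z
  have hg' : IntegrableOn g (Icc 0 b) := (integrableOn_Icc_iff_integrableOn_Ioo).2 hg
  have hint : ∀ z ∈ Icc 0 b, IntervalIntegrable g volume 0 z := fun z hz =>
    (hg'.mono_set (uIcc_of_le hz.1 ▸ Icc_subset_Icc_right hz.2)).intervalIntegrable
  have hpos : 0 < ∫ z in x..y, g z :=
    intervalIntegral.intervalIntegral_pos_of_pos_on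
      (hg'.mono_set (uIcc_of_le hxy.le ▸ Icc_subset_Icc hx.1 hy.2)).intervalIntegrable
      (fun z hz => hg_pos z ⟨hx.1.trans_lt hz.1, hz.2.trans_le hy.2⟩) hxy
  rw [← intervalIntegral.integral_add_adjacent_intervals (hint x hx)
    ((hint x hx).symm.trans (hint y hy))]
  linarith

theorem AntitoneOn.mul_le_primitive {b : ℝ} {g : ℝ → ℝ} (hg_anti : AntitoneOn g (Ioo 0 b))
    (hg : IntegrableOn g (Ioo 0 b)) {x : ℝ} (hx : x ∈ Ioo 0 b) :
    x * g x ≤ ∫ y in 0..x, g y := by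
  have hsub : Ioo 0 x ⊆ Ioo 0 b := Ioo_subset_Ioo_right hx.2.le
  calc x * g x = ∫ _ in 0..x, g x := by simp
    _ ≤ ∫ y in 0..x, g y :=
      intervalIntegral.integral_mono_on_of_le_Ioo hx.1.le intervalIntegrable_const
        ((intervalIntegrable_iff_integrableOn_Ioo_of_le hx.1.le).2 (hg.mono_set hsub))
        fun y hy => hg_anti (hsub hy) hx hy.2.le

theorem one_le_lintegral_mul_neg_log_primitive {b : ℝ} (hb : 0 ≤ b) {g : ℝ → ℝ}
    (hg : IntegrableOn g (Ioo 0 b)) (hg_pos : ∀ x ∈ Ioo 0 b, 0 < g x)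
    (hg_one : ∫ x in Ioo 0 b, g x = 1) :
    1 ≤ ∫⁻ x in Ioo 0 b, ENNReal.ofReal (g x * -log (∫ y in 0..x, g y)) := by
  set G : ℝ → ℝ := fun x => ∫ y in 0..x, g y
  have hG_eq : ∀ x ∈ Icc 0 b, G x = ∫ y in Ioo 0 x, g y := fun x hx => by
    simp only [G, intervalIntegral.integral_of_le hx.1, integral_Ioc_eq_integral_Ioo]
  have hG_cont : ContinuousOn G (Icc 0 b) := by
    have := intervalIntegral.continuousOn_primitive_interval (μ := volume) (a := 0) (b := b)
      (uIcc_of_le hb ▸ (integrableOn_Icc_iff_integrableOn_Ioo).2 hg)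
    rwa [uIcc_of_le hb] at this
  have hG_mono := strictMonoOn_primitive hg hg_pos
  have hG_zero : G 0 = 0 := intervalIntegral.integral_same
  have hG_one : G b = 1 := (hG_eq b ⟨hb, le_rfl⟩).trans hg_one
  have hG_mem : ∀ x ∈ Ioo 0 b, 0 < G x ∧ G x ≤ 1 := fun x hx =>
    ⟨hG_zero ▸ hG_mono ⟨le_rfl, hb⟩ (Ioo_subset_Icc_self hx) hx.1,
      hG_one ▸ hG_mono.monotoneOn (Ioo_subset_Icc_self hx) ⟨hb, le_rfl⟩ hx.2.le⟩
  set ν := (volume.restrict (Ioo 0 b)).withDensity fun x => ENNReal.ofReal (g x) with hν_def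
  have hν : ν ≪ volume.restrict (Ioo 0 b) := withDensity_absolutelyContinuous _ _
  have hG_meas : AEMeasurable G (volume.restrict (Ioo 0 b)) :=
    (hG_cont.mono Ioo_subset_Icc_self).aemeasurable measurableSet_Ioo
  have h_lintegral : ∫⁻ x in Ioo 0 b, ENNReal.ofReal (g x * -log (G x)) =
      ∫⁻ x, ENNReal.ofReal (-log (G x)) ∂ν := by
    rw [hν_def, lintegral_withDensity_eq_lintegral_mul₀
      (g := fun x => ENNReal.ofReal (-log (G x))) hg.aemeasurable.ennreal_ofReal
      hG_meas.log.neg.ennreal_ofReal]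
    refine setLIntegral_congr_fun measurableSet_Ioo fun x hx => ?_
    exact ENNReal.ofReal_mul (hg_pos x hx).le
  rw [h_lintegral]
  refine one_le_lintegral_neg_log (hG_meas.mono_ac hν)
    (hν.ae_le ((ae_restrict_iff' measurableSet_Ioo).2 (ae_of_all _ hG_mem))) fun u hu => ?_
  obtain ⟨x₁, hx₁, rfl⟩ : u ∈ G '' Icc 0 b :=
    intermediate_value_Icc hb hG_cont
      ⟨by rw [hG_zero]; exact hu.1.le, by rw [hG_one]; exact hu.2.le⟩
  calc ENNReal.ofReal (G x₁) = ν (Ioo 0 x₁) := by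
        rw [withDensity_apply _ measurableSet_Ioo,
          Measure.restrict_restrict_of_subset (Ioo_subset_Ioo_right hx₁.2), hG_eq x₁ hx₁,
          ofReal_integral_eq_lintegral_ofReal (hg.mono_set (Ioo_subset_Ioo_right hx₁.2))]
        exact (ae_restrict_iff' measurableSet_Ioo).2 (ae_of_all _ fun x hx =>
          (hg_pos x (Ioo_subset_Ioo_right hx₁.2 hx)).le)
    _ ≤ ν {x | G x ≤ G x₁} := measure_mono fun x hx =>
        hG_mono.monotoneOn ⟨hx.1.le, hx.2.le.trans hx₁.2⟩ hx₁ hx.2.le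

theorem setIntegral_mul_log_mul_le_neg_one {b : ℝ} (hb : 0 ≤ b) {g : ℝ → ℝ}
    (hg_anti : AntitoneOn g (Ioo 0 b)) (hg : IntegrableOn g (Ioo 0 b))
    (hg_pos : ∀ x ∈ Ioo 0 b, 0 < g x) (hg_one : ∫ x in Ioo 0 b, g x = 1)
    (hF : IntegrableOn (fun x => g x * log (x * g x)) (Ioo 0 b)) :
    ∫ x in Ioo 0 b, g x * log (x * g x) ≤ -1 := by
  set G : ℝ → ℝ := fun x => ∫ y in 0..x, g y
  have hG_le_one : ∀ x ∈ Ioo 0 b, G x ≤ 1 := fun x hx => by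
    have hG_b : G b = 1 := by
      simpa only [G, intervalIntegral.integral_of_le hb, integral_Ioc_eq_integral_Ioo] using hg_one
    exact hG_b ▸ (strictMonoOn_primitive hg hg_pos).monotoneOn (Ioo_subset_Icc_self hx)
      ⟨hb, le_rfl⟩ hx.2.le
  have h_pointwise : ∀ x ∈ Ioo 0 b,
      0 ≤ g x * -log (G x) ∧ g x * -log (G x) ≤ -(g x * log (x * g x)) := fun x hx => by
    have hxg := hg_anti.mul_le_primitive hg hx
    have hx_pos : 0 < x * g x := mul_pos hx.1 (hg_pos x hx)
    refine ⟨mul_nonneg (hg_pos x hx).le (neg_nonneg.2 (log_nonpos (hx_pos.le.trans hxg)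
      (hG_le_one x hx))), ?_⟩
    rw [mul_neg, neg_le_neg_iff]
    exact mul_le_mul_of_nonneg_left (log_le_log hx_pos hxg) (hg_pos x hx).le
  suffices (1 : ENNReal) ≤ ENNReal.ofReal (-∫ x in Ioo 0 b, g x * log (x * g x)) by
    linarith [ENNReal.one_le_ofReal.1 this]
  calc (1 : ENNReal) ≤ ∫⁻ x in Ioo 0 b, ENNReal.ofReal (g x * -log (G x)) :=
        one_le_lintegral_mul_neg_log_primitive hb hg hg_pos hg_one
    _ ≤ ∫⁻ x in Ioo 0 b, ENNReal.ofReal (-(g x * log (x * g x))) :=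
        setLIntegral_mono' measurableSet_Ioo fun x hx =>
          ENNReal.ofReal_le_ofReal (h_pointwise x hx).2
    _ = ENNReal.ofReal (-∫ x in Ioo 0 b, g x * log (x * g x)) := by
        rw [← integral_neg, ofReal_integral_eq_lintegral_ofReal
          (f := fun x => -(g x * log (x * g x))) hF.neg]
        exact (ae_restrict_iff' measurableSet_Ioo).2 (ae_of_all _ fun x hx =>
          (h_pointwise x hx).1.trans (h_pointwise x hx).2)

theorem MeasureTheory.Integrable.rpow_of_le {α : Type*} [MeasurableSpace α] {μ : Measure α}
    [IsFiniteMeasure μ] {f : α → ℝ} {s t : ℝ} (hf : AEMeasurable f μ)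
    (hf_nonneg : ∀ᵐ x ∂μ, 0 ≤ f x)
    (hs : Integrable (fun x => f x ^ s) μ) (ht : 0 ≤ t) (hts : t ≤ s) :
    Integrable (fun x => f x ^ t) μ := by
  refine ((integrable_const 1).add hs).mono' (hf.pow_const t).aestronglyMeasurable ?_
  filter_upwards [hf_nonneg] with x hx
  rw [norm_of_nonneg (rpow_nonneg hx t), Pi.add_apply]
  rcases le_total (f x) 1 with h | h
  · linarith [rpow_le_one hx h ht, rpow_nonneg hx s]
  · linarith [rpow_le_rpow_of_exponent_le h hts]

theorem slideFun_zero {b : ℝ} (hb : 0 < b) (f : ℝ → ℝ) : slideFun b f 0 = 0 := by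
  have h_norm : ∫ _ in Ioo (0 : ℝ) b, (1 : ℝ) = b := by simp [hb.le]
  have h_log : ∫ x in Ioo 0 b, 1 / b * log (x * (1 / b)) = -1 := by
    rw [← integral_Ioc_eq_integral_Ioo, ← intervalIntegral.integral_of_le hb.le,
      intervalIntegral.integral_const_mul]
    simp only [mul_one_div, intervalIntegral.integral_comp_div _ hb.ne', zero_div,
      div_self hb.ne', integral_log, log_one, smul_eq_mul]
    field_simp
    ring
  simp only [slideFun, rpow_zero, h_norm, h_log]
  ring

theorem slideFun_eq_neg_one_or_nonneg {b s t : ℝ} (hb : 0 < b) {f : ℝ → ℝ}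
    (hmono : AntitoneOn f (Ioo 0 b)) (hpos : ∀ x ∈ Ioo 0 b, 0 < f x)
    (hfs : IntegrableOn (fun x => f x ^ s) (Ioo 0 b)) (ht : 0 < t) (hts : t ≤ s) :
    slideFun b f t = -1 ∨ 0 ≤ slideFun b f t := by
  have hft : IntegrableOn (fun x => f x ^ t) (Ioo 0 b) :=
    Integrable.rpow_of_le (aemeasurable_restrict_of_antitoneOn measurableSet_Ioo hmono)
      ((ae_restrict_iff' measurableSet_Ioo).2 (ae_of_all _ fun x hx => (hpos x hx).le))
      hfs ht.le hts
  set A := ∫ x in Ioo 0 b, f x ^ t with hA_def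
  have hA : 0 < A := by
    rw [hA_def, ← integral_Ioc_eq_integral_Ioo, ← intervalIntegral.integral_of_le hb.le]
    exact intervalIntegral.intervalIntegral_pos_of_pos_on
      ((intervalIntegrable_iff_integrableOn_Ioo_of_le hb.le).2 hft)
      (fun x hx => rpow_pos_of_pos (hpos x hx) t) hb
  set g : ℝ → ℝ := fun x => f x ^ t / A
  by_cases hF : IntegrableOn (fun x => g x * log (x * g x)) (Ioo 0 b)
  · right
    have := setIntegral_mul_log_mul_le_neg_one hb.le (g := g)
      (fun x hx y hy hxy => div_le_div_of_nonneg_right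
        (rpow_le_rpow (hpos y hy).le (hmono hx hy hxy) ht.le) hA.le)
      (hft.div_const A) (fun x hx => div_pos (rpow_pos_of_pos (hpos x hx) t) hA)
      (by rw [integral_div, div_self hA.ne']) hF
    change 0 ≤ -1 - ∫ x in Ioo 0 b, g x * log (x * g x)
    linarith
  · left
    change -1 - ∫ x in Ioo 0 b, g x * log (x * g x) = -1
    rw [integral_undef hF, sub_zero]

/-- If `f : (0,b) → (0,∞)` is monotone decreasing with
`∫₀^b f(x)^s dx < ∞` for some `s > 0`, and the first slide derivative `ψ₁(f)` — the
right-hand derivative of `σ_f` at `0` — exists, then `ψ₁(f) ≥ 0`. -/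
theorem first_slide_derivative_nonneg (b s : ℝ) (hb : 0 < b) (hs : 0 < s)
    (f : ℝ → ℝ) (hmono : AntitoneOn f (Set.Ioo (0:ℝ) b))
    (hpos : ∀ x ∈ Set.Ioo (0:ℝ) b, 0 < f x)
    (hfs : IntegrableOn (fun x => f x ^ s) (Set.Ioo (0:ℝ) b))
    (ψ : ℝ) (hψ : HasDerivWithinAt (slideFun b f) ψ (Set.Ici 0) 0) :
    0 ≤ ψ := by
  have h_slope : Tendsto (fun t => t⁻¹ * slideFun b f t) (𝓝[>] 0) (𝓝 ψ) := by
    refine ((hasDerivWithinAt_iff_tendsto_slope' self_notMem_Ioi).1 hψ.Ioi_of_Ici).congr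
      fun t => ?_
    rw [slope_def_module, slideFun_zero hb f, sub_zero, sub_zero, smul_eq_mul]
  have h_blowup : Tendsto (fun t : ℝ => -t⁻¹) (𝓝[>] 0) atBot :=
    tendsto_neg_atTop_atBot.comp tendsto_inv_nhdsGT_zero
  refine ge_of_tendsto h_slope ?_
  filter_upwards [Ioo_mem_nhdsGT hs, h_slope.eventually (lt_mem_nhds (sub_one_lt ψ)),
    h_blowup.eventually (eventually_lt_atBot (ψ - 1))] with t ht h_near h_far
  rcases slideFun_eq_neg_one_or_nonneg hb hmono hpos hfs ht.1 ht.2.le with h | h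
  · rw [h] at h_near
    linarith
  · exact mul_nonneg (inv_nonneg.2 ht.1.le) h
end
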